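/- arXiv:1202.4425 — 2 statements merged into one kernel-verified Lean document; each statement's English description precedes it below -/
import Mathlib

section
/- Let n ≥ 1 and ε ≥ 0. Let W be a random variable uniformly distributed on a nonempty finite set 𝒲, let X_SD = (X_{SD,1},…,X_{SD,n}) and Y₁ = (Y_{1,1},…,Y_{1,n}) be random vectors with finite-valued coordinates, and let X_SR, Y₂ be finite-valued random variables, all on a common probability space. Assume: (i) H(W | (Y₁, Y₂)) ≤ n·ε (Fano condition); (ii) Y₁ is conditionally independent of (Y₂, W) given X_SD; (iii) Y₂ is conditionally independent of W given X_SR; (iv) for every i, Y_{1,i} is conditionally independent of ((X_{SD,j})_{j≠i}, (Y_{1,j})_{j<i}) given X_{SD,i} (memoryless S–D channel). Then log |𝒲| ≤ Σ_{i=1}^{n} I(X_{SD,i}; Y_{1,i}) + I(X_SR; Y₂) + n·ε. -/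
/-!
By uniformity and the Fano hypothesis, `log |𝒲| = H(W) ≤ I(W ; Y₁, Y₂) + nε`, and the chain rule
splits `I(W ; Y₁, Y₂) = I(W ; Y₂) + I(W ; Y₁ | Y₂)`. Data processing along `W − X_SR − Y₂` bounds
the first term by `I(X_SR ; Y₂)`. The second is at most `I((Y₂, W) ; Y₁)`, which data processing
along `(Y₂, W) − X_SD − Y₁` bounds by `I(X_SD ; Y₁)`. Memorylessness makes the direct link a
product channel, `P(y | x) = ∏ P(yᵢ | xᵢ)`, so `H(Y₁ | X_SD) = ∑ H(Y₁ᵢ | X_SDᵢ)`, while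
`H(Y₁) ≤ ∑ H(Y₁ᵢ)`.

Every entropy inequality here is Gibbs' inequality `H(T) ≤ -∑ₜ P(T = t) log q(t)` for a
subnormalised `q` built from marginals of `T`, after writing the entropy of each function of `T`
as a cross-entropy against the law of `T`.
-/

open MeasureTheory Real

noncomputable section

namespace InterferenceRelay

variable {Ω : Type*} [MeasurableSpace Ω]

/-- The probability `P(X = x)` of a random variable `X` taking the value `x`. -/
def pr (μ : Measure Ω) {α : Type*} (X : Ω → α) (x : α) : ℝ :=
  (μ {ω | X ω = x}).toReal

/-- Shannon entropy `H(X)` (natural logarithm) of a finite-valued random variable. -/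
def ent (μ : Measure Ω) {α : Type*} [Fintype α] (X : Ω → α) : ℝ :=
  ∑ x : α, Real.negMulLog (pr μ X x)

/-- Conditional entropy `H(X | Y) = H(X, Y) - H(Y)`. -/
def condEnt (μ : Measure Ω) {α β : Type*} [Fintype α] [Fintype β]
    (X : Ω → α) (Y : Ω → β) : ℝ :=
  ent μ (fun ω => (X ω, Y ω)) - ent μ Y

/-- Mutual information `I(X ; Y) = H(X) - H(X | Y)`. -/
def mutInfo (μ : Measure Ω) {α β : Type*} [Fintype α] [Fintype β]
    (X : Ω → α) (Y : Ω → β) : ℝ :=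
  ent μ X - condEnt μ X Y

/-- Conditional mutual information `I(X ; Y | Z) = H(X | Z) - H(X | (Y, Z))`. -/
def condMutInfo (μ : Measure Ω) {α β γ : Type*} [Fintype α] [Fintype β] [Fintype γ]
    (X : Ω → α) (Y : Ω → β) (Z : Ω → γ) : ℝ :=
  condEnt μ X Z - condEnt μ X (fun ω => (Y ω, Z ω))

/-- `Y` is conditionally independent of `Z` given `X`, i.e. the Markov chain `Z − X − Y`
holds: `P(X = x, Y = y, Z = z) ⬝ P(X = x) = P(X = x, Y = y) ⬝ P(X = x, Z = z)`
for all values `x, y, z`. -/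
def CondIndepGiven (μ : Measure Ω) {α β γ : Type*}
    (Y : Ω → β) (Z : Ω → γ) (X : Ω → α) : Prop :=
  ∀ (x : α) (y : β) (z : γ),
    μ {ω | X ω = x ∧ Y ω = y ∧ Z ω = z} * μ {ω | X ω = x} =
      μ {ω | X ω = x ∧ Y ω = y} * μ {ω | X ω = x ∧ Z ω = z}

section Probability

variable {μ : Measure Ω} {ι κ : Type*}

lemma pr_eq_measureReal (X : Ω → ι) (x : ι) : pr μ X x = μ.real (X ⁻¹' {x}) := rfl

lemma pr_nonneg (X : Ω → ι) (x : ι) : 0 ≤ pr μ X x := ENNReal.toReal_nonneg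

variable [IsFiniteMeasure μ]

lemma pr_le_pr_comp (X : Ω → ι) (g : ι → κ) (x : ι) :
    pr μ X x ≤ pr μ (fun ω => g (X ω)) (g x) :=
  measureReal_mono fun ω (h : X ω = x) => show g (X ω) = g x from h ▸ rfl

lemma pr_comp_ne_zero {X : Ω → ι} (g : ι → κ) {x : ι} (h : pr μ X x ≠ 0) :
    pr μ (fun ω => g (X ω)) (g x) ≠ 0 :=
  ((pr_nonneg X x).lt_of_ne' h |>.trans_le (pr_le_pr_comp X g x)).ne'

variable [MeasurableSpace ι] [MeasurableSingletonClass ι] [Fintype ι]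

lemma pr_comp [DecidableEq κ] {X : Ω → ι} (hX : Measurable X) (g : ι → κ) (c : κ) :
    pr μ (fun ω => g (X ω)) c = ∑ x with g x = c, pr μ X x := by
  simp only [pr_eq_measureReal]
  rw [sum_measureReal_preimage_singleton _ fun x _ => hX (measurableSet_singleton x)]
  congr 1
  ext ω
  simp

lemma sum_pr_mul_comp [Fintype κ] {X : Ω → ι} (hX : Measurable X) (g : ι → κ) (φ : κ → ℝ) :
    ∑ x, pr μ X x * φ (g x) = ∑ c, pr μ (fun ω => g (X ω)) c * φ c := by
  classical
  simp only [pr_comp hX, Finset.sum_mul]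
  rw [← Finset.sum_fiberwise Finset.univ g]
  refine Finset.sum_congr rfl fun c _ => Finset.sum_congr rfl fun x hx => ?_
  rw [(Finset.mem_filter.1 hx).2]

end Probability

lemma sum_pr {μ : Measure Ω} [IsProbabilityMeasure μ] {ι : Type*} [Fintype ι] [MeasurableSpace ι]
    [MeasurableSingletonClass ι] {X : Ω → ι} (hX : Measurable X) : ∑ x, pr μ X x = 1 := by
  classical
  simpa [pr] using (pr_comp (μ := μ) hX (fun _ => ()) ()).symm

lemma mul_log_sub_mul_log_le {p q : ℝ} (hp : 0 ≤ p) (hq : 0 ≤ q) (hpq : q = 0 → p = 0) :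
    p * log q - p * log p ≤ q - p := by
  rcases hp.eq_or_lt with rfl | hp
  · simpa using hq
  have hq : 0 < q := hq.lt_of_ne' fun h => hp.ne' (hpq h)
  calc p * log q - p * log p = p * log (q / p) := by rw [log_div hq.ne' hp.ne']; ring
    _ ≤ p * (q / p - 1) := mul_le_mul_of_nonneg_left (log_le_sub_one_of_pos (by positivity)) hp.le
    _ = q - p := by field_simp

lemma sum_mul_log_le_sum_mul_log {ι : Type*} [Fintype ι] {p q : ι → ℝ} (hp : ∀ i, 0 ≤ p i)
    (hq : ∀ i, 0 ≤ q i) (hpq : ∀ i, q i = 0 → p i = 0) (hsum : ∑ i, q i ≤ ∑ i, p i) :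
    ∑ i, p i * log (q i) ≤ ∑ i, p i * log (p i) := by
  have := Finset.sum_le_sum fun i (_ : i ∈ Finset.univ) =>
    mul_log_sub_mul_log_le (hp i) (hq i) (hpq i)
  simp only [Finset.sum_sub_distrib] at this
  linarith

section CrossEntropy

variable {μ : Measure Ω} {ι κ : Type*} [Fintype ι] [Fintype κ]

def crossEnt (μ : Measure Ω) (X : Ω → ι) (q : ι → ℝ) : ℝ :=
  -∑ x, pr μ X x * log (q x)

lemma ent_eq_crossEnt (X : Ω → ι) : ent μ X = crossEnt μ X (pr μ X) := by
  simp [ent, crossEnt, Real.negMulLog]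

variable {X : Ω → ι} {f g : ι → ℝ}

lemma crossEnt_eq_of_log_eq {φ : ι → ℝ} (h : ∀ x, pr μ X x ≠ 0 → log (f x) = φ x) :
    crossEnt μ X f = -∑ x, pr μ X x * φ x := by
  refine congrArg Neg.neg (Finset.sum_congr rfl fun x _ => ?_)
  by_cases hx : pr μ X x = 0
  · simp [hx]
  · rw [h x hx]

lemma crossEnt_congr (h : ∀ x, pr μ X x ≠ 0 → f x = g x) : crossEnt μ X f = crossEnt μ X g :=
  crossEnt_eq_of_log_eq fun x hx => by rw [h x hx]

lemma crossEnt_mul (hf : ∀ x, pr μ X x ≠ 0 → f x ≠ 0) (hg : ∀ x, pr μ X x ≠ 0 → g x ≠ 0) :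
    crossEnt μ X (fun x => f x * g x) = crossEnt μ X f + crossEnt μ X g := by
  rw [crossEnt_eq_of_log_eq fun x hx => log_mul (hf x hx) (hg x hx)]
  simp only [crossEnt, mul_add, Finset.sum_add_distrib]
  ring

lemma crossEnt_div (hf : ∀ x, pr μ X x ≠ 0 → f x ≠ 0) (hg : ∀ x, pr μ X x ≠ 0 → g x ≠ 0) :
    crossEnt μ X (fun x => f x / g x) = crossEnt μ X f - crossEnt μ X g := by
  rw [crossEnt_eq_of_log_eq fun x hx => log_div (hf x hx) (hg x hx)]
  simp only [crossEnt, mul_sub, Finset.sum_sub_distrib]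
  ring

lemma crossEnt_prod {f : κ → ι → ℝ}
    (hf : ∀ i x, pr μ X x ≠ 0 → f i x ≠ 0) :
    crossEnt μ X (fun x => ∏ i, f i x) = ∑ i, crossEnt μ X (f i) := by
  rw [crossEnt_eq_of_log_eq fun x hx => log_prod fun i _ => hf i x hx]
  simp only [crossEnt, Finset.mul_sum, Finset.sum_neg_distrib]
  rw [Finset.sum_comm]

lemma ent_le_crossEnt [IsProbabilityMeasure μ] [MeasurableSpace ι] [MeasurableSingletonClass ι]
    (hX : Measurable X) (hf : ∀ x, 0 ≤ f x) (hf1 : ∑ x, f x ≤ 1)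
    (hXf : ∀ x, pr μ X x ≠ 0 → f x ≠ 0) : ent μ X ≤ crossEnt μ X f := by
  rw [ent_eq_crossEnt, crossEnt, crossEnt, neg_le_neg_iff]
  exact sum_mul_log_le_sum_mul_log (pr_nonneg X) hf (fun x => not_imp_not.1 (hXf x))
    (hf1.trans (sum_pr hX).ge)

variable [IsFiniteMeasure μ] [MeasurableSpace ι] [MeasurableSingletonClass ι]

lemma ent_comp_eq_crossEnt (hX : Measurable X) (g : ι → κ) :
    ent μ (fun ω => g (X ω)) = crossEnt μ X (fun x => pr μ (fun ω => g (X ω)) (g x)) := by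
  rw [ent_eq_crossEnt, crossEnt, crossEnt,
    sum_pr_mul_comp (μ := μ) hX g fun c => log (pr μ (fun ω => g (X ω)) c)]

lemma ent_comp_of_injective (hX : Measurable X) {g : ι → κ} (hg : Function.Injective g) :
    ent μ (fun ω => g (X ω)) = ent μ X := by
  rw [ent_comp_eq_crossEnt hX, ent_eq_crossEnt]
  congr! 3 with x
  simp only [pr, hg.eq_iff]

end CrossEntropy

section EntropyInequalities

variable {μ : Measure Ω} [IsProbabilityMeasure μ] {α β γ : Type*}
  [Fintype α] [MeasurableSpace α] [MeasurableSingletonClass α]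
  [Fintype β] [MeasurableSpace β] [MeasurableSingletonClass β]
  [Fintype γ] [MeasurableSpace γ] [MeasurableSingletonClass γ]
  {X : Ω → α} {Y : Ω → β} {Z : Ω → γ}

lemma sum_pr_pair_left (hX : Measurable X) (hY : Measurable Y) (y : β) :
    ∑ x, pr μ (fun ω => (X ω, Y ω)) (x, y) = pr μ Y y := by
  classical
  rw [show pr μ Y y = pr μ (fun ω => (X ω, Y ω).2) y from rfl, pr_comp (hX.prodMk hY)]
  simp [Finset.sum_filter, Fintype.sum_prod_type]

lemma ent_pair_le_add (hX : Measurable X) (hY : Measurable Y) :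
    ent μ (fun ω => (X ω, Y ω)) ≤ ent μ X + ent μ Y := by
  have hXY := hX.prodMk hY
  have hfst : ∀ v, pr μ (fun ω => (X ω, Y ω)) v ≠ 0 → pr μ X v.1 ≠ 0 :=
    fun _ => pr_comp_ne_zero Prod.fst
  have hsnd : ∀ v, pr μ (fun ω => (X ω, Y ω)) v ≠ 0 → pr μ Y v.2 ≠ 0 :=
    fun _ => pr_comp_ne_zero Prod.snd
  have hsum : ∑ v : α × β, pr μ X v.1 * pr μ Y v.2 = 1 := by
    rw [Fintype.sum_prod_type, ← Finset.sum_mul_sum, sum_pr hX, sum_pr hY, one_mul]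
  calc ent μ (fun ω => (X ω, Y ω))
      ≤ crossEnt μ (fun ω => (X ω, Y ω)) (fun v => pr μ X v.1 * pr μ Y v.2) :=
        ent_le_crossEnt hXY (fun _ => mul_nonneg (pr_nonneg _ _) (pr_nonneg _ _)) hsum.le
          fun v hv => mul_ne_zero (hfst v hv) (hsnd v hv)
    _ = ent μ X + ent μ Y := by
      rw [crossEnt_mul hfst hsnd]
      exact congrArg₂ (· + ·) (ent_comp_eq_crossEnt hXY Prod.fst).symm
        (ent_comp_eq_crossEnt hXY Prod.snd).symm

lemma ent_submodular (hX : Measurable X) (hY : Measurable Y) (hZ : Measurable Z) :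
    ent μ (fun ω => (X ω, Y ω, Z ω)) + ent μ Z ≤
      ent μ (fun ω => (X ω, Z ω)) + ent μ (fun ω => (Y ω, Z ω)) := by
  have hT := hX.prodMk (hY.prodMk hZ)
  have hXZ : ∀ v, pr μ (fun ω => (X ω, Y ω, Z ω)) v ≠ 0 →
      pr μ (fun ω => (X ω, Z ω)) (v.1, v.2.2) ≠ 0 :=
    fun _ => pr_comp_ne_zero fun v : α × β × γ => (v.1, v.2.2)
  have hYZ : ∀ v, pr μ (fun ω => (X ω, Y ω, Z ω)) v ≠ 0 →
      pr μ (fun ω => (Y ω, Z ω)) (v.2.1, v.2.2) ≠ 0 :=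
    fun _ => pr_comp_ne_zero fun v : α × β × γ => (v.2.1, v.2.2)
  have hZ' : ∀ v, pr μ (fun ω => (X ω, Y ω, Z ω)) v ≠ 0 → pr μ Z v.2.2 ≠ 0 :=
    fun _ => pr_comp_ne_zero fun v : α × β × γ => v.2.2
  have hsum : ∑ v : α × β × γ, pr μ (fun ω => (X ω, Z ω)) (v.1, v.2.2) *
      pr μ (fun ω => (Y ω, Z ω)) (v.2.1, v.2.2) / pr μ Z v.2.2 = 1 := by
    calc _ = ∑ z, (∑ x, pr μ (fun ω => (X ω, Z ω)) (x, z)) *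
          (∑ y, pr μ (fun ω => (Y ω, Z ω)) (y, z)) / pr μ Z z := by
          simp only [Fintype.sum_prod_type, Finset.sum_mul_sum, Finset.sum_div]
          conv_rhs => rw [Finset.sum_comm]
          exact Finset.sum_congr rfl fun x _ => Finset.sum_comm
      _ = ∑ z, pr μ Z z := by
          simp only [sum_pr_pair_left hX hZ, sum_pr_pair_left hY hZ, mul_self_div_self]
      _ = 1 := sum_pr hZ
  have hle := ent_le_crossEnt hT
    (fun _ => div_nonneg (mul_nonneg (pr_nonneg _ _) (pr_nonneg _ _)) (pr_nonneg _ _)) hsum.le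
    fun v hv => div_ne_zero (mul_ne_zero (hXZ v hv) (hYZ v hv)) (hZ' v hv)
  rw [crossEnt_div (fun v hv => mul_ne_zero (hXZ v hv) (hYZ v hv)) hZ',
    crossEnt_mul hXZ hYZ] at hle
  have eXZ : ent μ (fun ω => (X ω, Z ω)) = crossEnt μ (fun ω => (X ω, Y ω, Z ω))
      (fun v => pr μ (fun ω => (X ω, Z ω)) (v.1, v.2.2)) :=
    ent_comp_eq_crossEnt hT fun v => (v.1, v.2.2)
  have eYZ : ent μ (fun ω => (Y ω, Z ω)) = crossEnt μ (fun ω => (X ω, Y ω, Z ω))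
      (fun v => pr μ (fun ω => (Y ω, Z ω)) (v.2.1, v.2.2)) :=
    ent_comp_eq_crossEnt hT fun v => (v.2.1, v.2.2)
  have eZ : ent μ Z = crossEnt μ (fun ω => (X ω, Y ω, Z ω)) (fun v => pr μ Z v.2.2) :=
    ent_comp_eq_crossEnt hT fun v => v.2.2
  linarith

lemma ent_triple_add_ent_eq_of_condIndep (hX : Measurable X) (hY : Measurable Y)
    (hZ : Measurable Z) (h : CondIndepGiven μ Y Z X) :
    ent μ (fun ω => (X ω, Y ω, Z ω)) + ent μ X =
      ent μ (fun ω => (X ω, Y ω)) + ent μ (fun ω => (X ω, Z ω)) := by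
  have hT := hX.prodMk (hY.prodMk hZ)
  have hXY : ∀ v, pr μ (fun ω => (X ω, Y ω, Z ω)) v ≠ 0 →
      pr μ (fun ω => (X ω, Y ω)) (v.1, v.2.1) ≠ 0 :=
    fun _ => pr_comp_ne_zero fun v : α × β × γ => (v.1, v.2.1)
  have hXZ : ∀ v, pr μ (fun ω => (X ω, Y ω, Z ω)) v ≠ 0 →
      pr μ (fun ω => (X ω, Z ω)) (v.1, v.2.2) ≠ 0 :=
    fun _ => pr_comp_ne_zero fun v : α × β × γ => (v.1, v.2.2)
  have hX' : ∀ v, pr μ (fun ω => (X ω, Y ω, Z ω)) v ≠ 0 → pr μ X v.1 ≠ 0 :=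
    fun _ => pr_comp_ne_zero fun v : α × β × γ => v.1
  have hfac : ∀ v : α × β × γ, pr μ (fun ω => (X ω, Y ω, Z ω)) v * pr μ X v.1 =
      pr μ (fun ω => (X ω, Y ω)) (v.1, v.2.1) * pr μ (fun ω => (X ω, Z ω)) (v.1, v.2.2) := by
    rintro ⟨x, y, z⟩
    simp only [pr, ← ENNReal.toReal_mul, Prod.mk.injEq]
    rw [h x y z]
  have heq : ent μ (fun ω => (X ω, Y ω, Z ω)) = crossEnt μ (fun ω => (X ω, Y ω, Z ω)) fun v =>
      pr μ (fun ω => (X ω, Y ω)) (v.1, v.2.1) * pr μ (fun ω => (X ω, Z ω)) (v.1, v.2.2) /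
        pr μ X v.1 := by
    rw [ent_eq_crossEnt]
    exact crossEnt_congr fun v hv => eq_div_of_mul_eq (hX' v hv) (hfac v)
  rw [crossEnt_div (fun v hv => mul_ne_zero (hXY v hv) (hXZ v hv)) hX',
    crossEnt_mul hXY hXZ] at heq
  have eXY : ent μ (fun ω => (X ω, Y ω)) = crossEnt μ (fun ω => (X ω, Y ω, Z ω))
      (fun v => pr μ (fun ω => (X ω, Y ω)) (v.1, v.2.1)) :=
    ent_comp_eq_crossEnt hT fun v => (v.1, v.2.1)
  have eXZ : ent μ (fun ω => (X ω, Z ω)) = crossEnt μ (fun ω => (X ω, Y ω, Z ω))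
      (fun v => pr μ (fun ω => (X ω, Z ω)) (v.1, v.2.2)) :=
    ent_comp_eq_crossEnt hT fun v => (v.1, v.2.2)
  have eX : ent μ X = crossEnt μ (fun ω => (X ω, Y ω, Z ω)) (fun v => pr μ X v.1) :=
    ent_comp_eq_crossEnt hT fun v => v.1
  linarith

end EntropyInequalities

section MutualInformation

variable {μ : Measure Ω} {α β γ : Type*} [Fintype α] [Fintype β] [Fintype γ]
  {X : Ω → α} {Y : Ω → β} {Z : Ω → γ}

lemma mutInfo_eq_ent_add_ent_sub_ent (X : Ω → α) (Y : Ω → β) :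
    mutInfo μ X Y = ent μ X + ent μ Y - ent μ (fun ω => (X ω, Y ω)) := by
  unfold mutInfo condEnt
  ring

lemma mutInfo_pair_eq_add_condMutInfo (X : Ω → α) (Y : Ω → β) (Z : Ω → γ) :
    mutInfo μ X (fun ω => (Y ω, Z ω)) = mutInfo μ X Z + condMutInfo μ X Y Z := by
  unfold mutInfo condMutInfo condEnt
  ring

variable [IsProbabilityMeasure μ]
  [MeasurableSpace α] [MeasurableSingletonClass α]
  [MeasurableSpace β] [MeasurableSingletonClass β]
  [MeasurableSpace γ] [MeasurableSingletonClass γ]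

lemma mutInfo_le_mutInfo_of_condIndep (hX : Measurable X) (hY : Measurable Y)
    (hZ : Measurable Z) (h : CondIndepGiven μ Y Z X) : mutInfo μ Z Y ≤ mutInfo μ X Y := by
  have hmarkov := ent_triple_add_ent_eq_of_condIndep hX hY hZ h
  have hsub := ent_submodular (μ := μ) hX hY hZ
  have hswap : ent μ (fun ω => (Z ω, Y ω)) = ent μ (fun ω => (Y ω, Z ω)) :=
    ent_comp_of_injective (hY.prodMk hZ) Prod.swap_injective
  rw [mutInfo_eq_ent_add_ent_sub_ent, mutInfo_eq_ent_add_ent_sub_ent, hswap]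
  linarith

lemma condMutInfo_le_mutInfo (hX : Measurable X) (hY : Measurable Y) (hZ : Measurable Z) :
    condMutInfo μ X Y Z ≤ mutInfo μ (fun ω => (Z ω, X ω)) Y := by
  have hYZ := ent_pair_le_add (μ := μ) hY hZ
  have hXZ : ent μ (fun ω => (Z ω, X ω)) = ent μ (fun ω => (X ω, Z ω)) :=
    ent_comp_of_injective (hX.prodMk hZ) Prod.swap_injective
  have hXYZ : ent μ (fun ω => ((Z ω, X ω), Y ω)) = ent μ (fun ω => (X ω, Y ω, Z ω)) :=
    ent_comp_of_injective (hX.prodMk (hY.prodMk hZ))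
      (g := fun v : α × β × γ => ((v.2.2, v.1), v.2.1))
      fun v w h => by simp_all [Prod.ext_iff]
  rw [mutInfo_eq_ent_add_ent_sub_ent, hXZ, hXYZ]
  unfold condMutInfo condEnt
  linarith

end MutualInformation

section Vectors

variable {μ : Measure Ω} [IsProbabilityMeasure μ] {ι : Type*} [Fintype ι] [DecidableEq ι]
  {α β : ι → Type*}
  [∀ i, Fintype (α i)] [∀ i, MeasurableSpace (α i)] [∀ i, MeasurableSingletonClass (α i)]
  [∀ i, Fintype (β i)] [∀ i, MeasurableSpace (β i)] [∀ i, MeasurableSingletonClass (β i)]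
  {X : Ω → ∀ i, α i} {Y : Ω → ∀ i, β i}

lemma ent_pi_le_sum (hY : Measurable Y) : ent μ Y ≤ ∑ i, ent μ (fun ω => Y ω i) := by
  have hYi : ∀ i y, pr μ Y y ≠ 0 → pr μ (fun ω => Y ω i) (y i) ≠ 0 :=
    fun i _ => pr_comp_ne_zero fun y : ∀ i, β i => y i
  have hsum : ∑ y : ∀ i, β i, ∏ i, pr μ (fun ω => Y ω i) (y i) = 1 := by
    rw [← Fintype.prod_sum]
    exact Finset.prod_eq_one fun i _ => sum_pr (measurable_pi_apply i |>.comp hY)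
  calc ent μ Y ≤ crossEnt μ Y fun y => ∏ i, pr μ (fun ω => Y ω i) (y i) :=
        ent_le_crossEnt hY (fun _ => Finset.prod_nonneg fun _ _ => pr_nonneg _ _) hsum.le
          fun y hy => Finset.prod_ne_zero_iff.2 fun i _ => hYi i y hy
    _ = ∑ i, ent μ (fun ω => Y ω i) := by
      rw [crossEnt_prod hYi]
      exact Finset.sum_congr rfl fun i _ => (ent_comp_eq_crossEnt hY fun y => y i).symm

/-- `P(Y = y | X = x) = ∏ i, P(Yᵢ = yᵢ | Xᵢ = xᵢ)`, cleared of denominators so that it is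
meaningful where `P(X = x) = 0`. -/
def IsProductChannel (μ : Measure Ω) (X : Ω → ∀ i, α i) (Y : Ω → ∀ i, β i) : Prop :=
  ∀ x y, pr μ (fun ω => (X ω, Y ω)) (x, y) * ∏ i, pr μ (fun ω => X ω i) (x i) =
    pr μ X x * ∏ i, pr μ (fun ω => (X ω i, Y ω i)) (x i, y i)

lemma ent_pair_sub_ent_eq_sum (hX : Measurable X) (hY : Measurable Y)
    (h : IsProductChannel μ X Y) :
    ent μ (fun ω => (X ω, Y ω)) - ent μ X =
      ∑ i, (ent μ (fun ω => (X ω i, Y ω i)) - ent μ (fun ω => X ω i)) := by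
  have hT := hX.prodMk hY
  have hX' : ∀ v, pr μ (fun ω => (X ω, Y ω)) v ≠ 0 → pr μ X v.1 ≠ 0 :=
    fun _ => pr_comp_ne_zero Prod.fst
  have hXi : ∀ i v, pr μ (fun ω => (X ω, Y ω)) v ≠ 0 → pr μ (fun ω => X ω i) (v.1 i) ≠ 0 :=
    fun i _ => pr_comp_ne_zero fun v : (∀ i, α i) × (∀ i, β i) => v.1 i
  have hXYi : ∀ i v, pr μ (fun ω => (X ω, Y ω)) v ≠ 0 →
      pr μ (fun ω => (X ω i, Y ω i)) (v.1 i, v.2 i) ≠ 0 :=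
    fun i _ => pr_comp_ne_zero fun v : (∀ i, α i) × (∀ i, β i) => (v.1 i, v.2 i)
  have hXi' : ∀ v, pr μ (fun ω => (X ω, Y ω)) v ≠ 0 → ∏ i, pr μ (fun ω => X ω i) (v.1 i) ≠ 0 :=
    fun v hv => Finset.prod_ne_zero_iff.2 fun i _ => hXi i v hv
  have hXYi' : ∀ v, pr μ (fun ω => (X ω, Y ω)) v ≠ 0 →
      ∏ i, pr μ (fun ω => (X ω i, Y ω i)) (v.1 i, v.2 i) ≠ 0 :=
    fun v hv => Finset.prod_ne_zero_iff.2 fun i _ => hXYi i v hv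
  have heq : ent μ (fun ω => (X ω, Y ω)) = crossEnt μ (fun ω => (X ω, Y ω)) fun v =>
      pr μ X v.1 * (∏ i, pr μ (fun ω => (X ω i, Y ω i)) (v.1 i, v.2 i)) /
        ∏ i, pr μ (fun ω => X ω i) (v.1 i) := by
    rw [ent_eq_crossEnt]
    exact crossEnt_congr fun v hv => eq_div_of_mul_eq (hXi' v hv) (h v.1 v.2)
  rw [crossEnt_div (fun v hv => mul_ne_zero (hX' v hv) (hXYi' v hv)) hXi',
    crossEnt_mul hX' hXYi', crossEnt_prod hXYi, crossEnt_prod hXi] at heq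
  have eX : ent μ X = crossEnt μ (fun ω => (X ω, Y ω)) (fun v => pr μ X v.1) :=
    ent_comp_eq_crossEnt hT Prod.fst
  have eXi : ∀ i, ent μ (fun ω => X ω i) =
      crossEnt μ (fun ω => (X ω, Y ω)) (fun v => pr μ (fun ω => X ω i) (v.1 i)) :=
    fun i => ent_comp_eq_crossEnt hT fun v => v.1 i
  have eXYi : ∀ i, ent μ (fun ω => (X ω i, Y ω i)) =
      crossEnt μ (fun ω => (X ω, Y ω)) (fun v => pr μ (fun ω => (X ω i, Y ω i)) (v.1 i, v.2 i)) :=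
    fun i => ent_comp_eq_crossEnt hT fun v => (v.1 i, v.2 i)
  rw [heq, eX, Finset.sum_sub_distrib]
  simp only [eXi, eXYi]
  ring

lemma mutInfo_le_sum_mutInfo (hX : Measurable X) (hY : Measurable Y)
    (h : IsProductChannel μ X Y) :
    mutInfo μ X Y ≤ ∑ i, mutInfo μ (fun ω => X ω i) (fun ω => Y ω i) := by
  have hcond := ent_pair_sub_ent_eq_sum hX hY h
  have hsub := ent_pi_le_sum (μ := μ) hY
  simp only [mutInfo_eq_ent_add_ent_sub_ent, Finset.sum_sub_distrib, Finset.sum_add_distrib]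
    at hcond ⊢
  linarith

end Vectors

section Memoryless

variable {μ : Measure Ω} {n : ℕ} {α β : Fin n → Type*} {X : Ω → ∀ i, α i} {Y : Ω → ∀ i, β i}

def IsMemoryless (μ : Measure Ω) (X : Ω → ∀ i, α i) (Y : Ω → ∀ i, β i) : Prop :=
  ∀ i : Fin n, CondIndepGiven μ (fun ω => Y ω i)
    (fun ω => ((fun j : {j : Fin n // j ≠ i} => X ω j.1),
               (fun j : {j : Fin n // j.1 < i} => Y ω j.1)))
    (fun ω => X ω i)

def prefixEvent (X : Ω → ∀ i, α i) (Y : Ω → ∀ i, β i) (x : ∀ i, α i) (y : ∀ i, β i) (k : ℕ) :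
    Set Ω :=
  {ω | X ω = x ∧ ∀ j : Fin n, (j : ℕ) < k → Y ω j = y j}

lemma IsMemoryless.measure_prefixEvent_succ (h : IsMemoryless μ X Y) (x : ∀ i, α i)
    (y : ∀ i, β i) (i : Fin n) :
    μ (prefixEvent X Y x y (i + 1)) * μ {ω | X ω i = x i} =
      μ {ω | X ω i = x i ∧ Y ω i = y i} * μ (prefixEvent X Y x y i) := by
  convert h i (x i) (y i) ((fun j => x j.1), (fun j => y j.1)) using 3 <;> ext ω <;>
    simp only [prefixEvent, Set.mem_ofPred_eq, Prod.mk.injEq, funext_iff, Subtype.forall] <;>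
    grind

lemma IsMemoryless.measure_prefixEvent_mul_prod (h : IsMemoryless μ X Y) (x : ∀ i, α i)
    (y : ∀ i, β i) {k : ℕ} (hk : k ≤ n) :
    μ (prefixEvent X Y x y k) * ∏ j : Fin n with j.val < k, μ {ω | X ω j = x j} =
      μ {ω | X ω = x} * ∏ j : Fin n with j.val < k, μ {ω | X ω j = x j ∧ Y ω j = y j} := by
  induction k with
  | zero => simp [prefixEvent]
  | succ k ih =>
    set i : Fin n := ⟨k, hk⟩
    have hfilter : Finset.univ.filter (fun j : Fin n => j.val < k + 1) =
        insert i (Finset.univ.filter fun j : Fin n => j.val < k) := by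
      ext j
      simp only [Finset.mem_filter, Finset.mem_univ, true_and, Finset.mem_insert, i, Fin.ext_iff]
      omega
    have hi : i ∉ Finset.univ.filter fun j : Fin n => j.val < k := by simp [i]
    rw [hfilter, Finset.prod_insert hi, Finset.prod_insert hi]
    calc _ = μ (prefixEvent X Y x y (i + 1)) * μ {ω | X ω i = x i} *
          ∏ j : Fin n with j.val < k, μ {ω | X ω j = x j} := by ring
      _ = μ {ω | X ω i = x i ∧ Y ω i = y i} * (μ (prefixEvent X Y x y k) *
          ∏ j : Fin n with j.val < k, μ {ω | X ω j = x j}) := by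
        rw [h.measure_prefixEvent_succ]; ring
      _ = _ := by rw [ih (Nat.le_of_succ_le hk)]; ring

lemma IsMemoryless.isProductChannel (h : IsMemoryless μ X Y) : IsProductChannel μ X Y := by
  intro x y
  have := h.measure_prefixEvent_mul_prod x y le_rfl
  simp only [Fin.is_lt, Finset.filter_true] at this
  simp only [pr, Prod.mk.injEq, ← ENNReal.toReal_prod, ← ENNReal.toReal_mul]
  convert congrArg ENNReal.toReal this using 4
  ext ω
  simp [prefixEvent, funext_iff]

end Memoryless

lemma ent_eq_log_card_of_uniform {μ : Measure Ω} {𝒲 : Type*} [Fintype 𝒲] {W : Ω → 𝒲}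
    (h : ∀ w, μ {ω | W ω = w} = (Fintype.card 𝒲 : ENNReal)⁻¹) :
    ent μ W = log (Fintype.card 𝒲) := by
  have hpr : ∀ w, pr μ W w = (Fintype.card 𝒲 : ℝ)⁻¹ := fun w => by simp [pr, h w]
  simp only [ent, hpr, Finset.sum_const, Finset.card_univ, nsmul_eq_mul, negMulLog, log_inv]
  rcases (Fintype.card 𝒲).eq_zero_or_pos with h0 | h0
  · simp [h0]
  · field_simp

end InterferenceRelay

open InterferenceRelay in
theorem converse_orthogonal_relay_general
    {Ω 𝒲 : Type*} [MeasurableSpace Ω]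
    [MeasurableSpace 𝒲] [MeasurableSingletonClass 𝒲] [Fintype 𝒲]
    {n : ℕ} {ε : ℝ}
    {α β : Fin n → Type*}
    [∀ i, MeasurableSpace (α i)] [∀ i, MeasurableSingletonClass (α i)] [∀ i, Fintype (α i)]
    [∀ i, MeasurableSpace (β i)] [∀ i, MeasurableSingletonClass (β i)] [∀ i, Fintype (β i)]
    {γ δ : Type*}
    [MeasurableSpace γ] [MeasurableSingletonClass γ] [Fintype γ]
    [MeasurableSpace δ] [MeasurableSingletonClass δ] [Fintype δ]
    (μ : MeasureTheory.Measure Ω) [MeasureTheory.IsProbabilityMeasure μ]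
    (W : Ω → 𝒲) (XSD : Ω → ∀ i, α i) (Y₁ : Ω → ∀ i, β i) (XSR : Ω → γ) (Y₂ : Ω → δ)
    (hW : Measurable W)
    (hXSD : ∀ i, Measurable fun ω => XSD ω i) (hY₁ : ∀ i, Measurable fun ω => Y₁ ω i)
    (hXSR : Measurable XSR) (hY₂ : Measurable Y₂)
    (hunif : ∀ w : 𝒲, μ {ω | W ω = w} = (Fintype.card 𝒲 : ENNReal)⁻¹)
    (hFano : condEnt μ W (fun ω => (Y₁ ω, Y₂ ω)) ≤ n * ε)
    (hmc₁ : CondIndepGiven μ Y₁ (fun ω => (Y₂ ω, W ω)) XSD)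
    (hmc₂ : CondIndepGiven μ Y₂ W XSR)
    (hmem : ∀ i : Fin n,
      CondIndepGiven μ (fun ω => Y₁ ω i)
        (fun ω => ((fun j : {j : Fin n // j ≠ i} => XSD ω j.1),
                   (fun j : {j : Fin n // j.1 < i} => Y₁ ω j.1)))
        (fun ω => XSD ω i)) :
    Real.log (Fintype.card 𝒲) ≤
      (∑ i : Fin n, mutInfo μ (fun ω => XSD ω i) (fun ω => Y₁ ω i)) +
        mutInfo μ XSR Y₂ + n * ε := by
  have hXSD' : Measurable XSD := measurable_pi_iff.2 hXSD
  have hY₁' : Measurable Y₁ := measurable_pi_iff.2 hY₁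
  have hrelay : mutInfo μ W Y₂ ≤ mutInfo μ XSR Y₂ :=
    mutInfo_le_mutInfo_of_condIndep hXSR hY₂ hW hmc₂
  have hdirect : condMutInfo μ W Y₁ Y₂ ≤ mutInfo μ XSD Y₁ :=
    (condMutInfo_le_mutInfo hW hY₁' hY₂).trans
      (mutInfo_le_mutInfo_of_condIndep hXSD' hY₁' (hY₂.prodMk hW) hmc₁)
  have hsingle : mutInfo μ XSD Y₁ ≤ ∑ i, mutInfo μ (fun ω => XSD ω i) (fun ω => Y₁ ω i) :=
    mutInfo_le_sum_mutInfo hXSD' hY₁' (IsMemoryless.isProductChannel hmem)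
  calc Real.log (Fintype.card 𝒲) = ent μ W := (ent_eq_log_card_of_uniform hunif).symm
    _ = mutInfo μ W Y₂ + condMutInfo μ W Y₁ Y₂ + condEnt μ W (fun ω => (Y₁ ω, Y₂ ω)) := by
      rw [← mutInfo_pair_eq_add_condMutInfo]
      unfold mutInfo
      ring
    _ ≤ _ := by linarith

open InterferenceRelay in
/-- Converse bound (Appendix A): if `W` is uniform on `𝒲`, Fano's inequality
`H(W | (Y₁, Y₂)) ≤ n ε` holds, the Markov chains `(Y₂, W) − X_SD − Y₁` and `W − X_SR − Y₂`
hold, and the `S–D` channel is memoryless (for every `i`, `Y₁ᵢ` is conditionally independent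
of `((X_SD j)_{j ≠ i}, (Y₁ j)_{j < i})` given `X_SD i`), then
`log |𝒲| ≤ ∑ i, I(X_SDᵢ ; Y₁ᵢ) + I(X_SR ; Y₂) + n ε`. -/
theorem converse_orthogonal_relay
    {Ω 𝒲 : Type*} [MeasurableSpace Ω]
    [MeasurableSpace 𝒲] [MeasurableSingletonClass 𝒲] [Fintype 𝒲] [Nonempty 𝒲]
    {n : ℕ} (hn : 1 ≤ n) {ε : ℝ} (hε : 0 ≤ ε)
    {α β : Fin n → Type*}
    [∀ i, MeasurableSpace (α i)] [∀ i, MeasurableSingletonClass (α i)] [∀ i, Fintype (α i)]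
    [∀ i, MeasurableSpace (β i)] [∀ i, MeasurableSingletonClass (β i)] [∀ i, Fintype (β i)]
    {γ δ : Type*}
    [MeasurableSpace γ] [MeasurableSingletonClass γ] [Fintype γ]
    [MeasurableSpace δ] [MeasurableSingletonClass δ] [Fintype δ]
    (μ : MeasureTheory.Measure Ω) [MeasureTheory.IsProbabilityMeasure μ]
    (W : Ω → 𝒲) (XSD : Ω → ∀ i, α i) (Y₁ : Ω → ∀ i, β i) (XSR : Ω → γ) (Y₂ : Ω → δ)
    (hW : Measurable W)
    (hXSD : ∀ i, Measurable fun ω => XSD ω i) (hY₁ : ∀ i, Measurable fun ω => Y₁ ω i)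
    (hXSR : Measurable XSR) (hY₂ : Measurable Y₂)
    (hunif : ∀ w : 𝒲, μ {ω | W ω = w} = (Fintype.card 𝒲 : ENNReal)⁻¹)
    (hFano : condEnt μ W (fun ω => (Y₁ ω, Y₂ ω)) ≤ n * ε)
    (hmc₁ : CondIndepGiven μ Y₁ (fun ω => (Y₂ ω, W ω)) XSD)
    (hmc₂ : CondIndepGiven μ Y₂ W XSR)
    (hmem : ∀ i : Fin n,
      CondIndepGiven μ (fun ω => Y₁ ω i)
        (fun ω => ((fun j : {j : Fin n // j ≠ i} => XSD ω j.1),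
                   (fun j : {j : Fin n // j.1 < i} => Y₁ ω j.1)))
        (fun ω => XSD ω i)) :
    Real.log (Fintype.card 𝒲) ≤
      (∑ i : Fin n, mutInfo μ (fun ω => XSD ω i) (fun ω => Y₁ ω i)) +
        mutInfo μ XSR Y₂ + n * ε :=
  converse_orthogonal_relay_general μ W XSD Y₁ XSR Y₂ hW hXSD hY₁ hXSR hY₂ hunif hFano hmc₁ hmc₂
    hmem
end
end

section
/- Let S and V be real numbers with S > 0 and V ≥ 0. For α ∈ ℂ define f(α) = S·(S + V + 1) / ( S·V·|1 − α|² + |α|²·V + S ). Then f(α) ≤ 1 + S for every α ∈ ℂ, with equality for α = S/(S+1); consequently sup_{α ∈ ℂ} f(α) = 1 + S. Equivalently, for every α ∈ ℂ, S·V·|1 − α|² + |α|²·V + S ≥ S·(S + V + 1)/(S + 1), with equality at α = S/(S+1). -/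
/-! Weighting the squared distances from `α` to `1` and `0` by `S` and `1` and completing the
square, `S ‖1 - α‖² + ‖α‖² = (S + 1) ‖α - S / (S + 1)‖² + S / (S + 1)`. Hence the denominator
equals `V (S + 1) ‖α - S / (S + 1)‖² + S (S + V + 1) / (S + 1)`, minimal exactly at the Costa
factor, where `f` attains `1 + S`. -/

theorem mul_norm_sub_sq_add_mul_norm_sub_sq {E : Type*} [NormedAddCommGroup E]
    [InnerProductSpace ℝ E] {a b : ℝ} (hab : a + b ≠ 0) (x u v : E) :
    a * ‖x - u‖ ^ 2 + b * ‖x - v‖ ^ 2 =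
      (a + b) * ‖x - (a + b)⁻¹ • (a • u + b • v)‖ ^ 2 + a * b / (a + b) * ‖u - v‖ ^ 2 := by
  simp only [← real_inner_self_eq_norm_sq, inner_sub_left, inner_sub_right, inner_add_left,
    inner_add_right, real_inner_smul_left, real_inner_smul_right, real_inner_comm x u,
    real_inner_comm x v, real_inner_comm u v]
  field_simp
  ring

section DirtyPaperCoding

variable {S V : ℝ}

theorem dpc_denominator_eq (hS : S + 1 ≠ 0) (α : ℂ) :
    S * V * ‖1 - α‖ ^ 2 + ‖α‖ ^ 2 * V + S =
      V * (S + 1) * ‖α - ((S / (S + 1) : ℝ) : ℂ)‖ ^ 2 + S * (S + V + 1) / (S + 1) := by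
  have hsq := mul_norm_sub_sq_add_mul_norm_sub_sq hS α 1 0
  have hmean : (S + 1)⁻¹ • (S • (1 : ℂ) + (1 : ℝ) • 0) = ((S / (S + 1) : ℝ) : ℂ) := by
    simp only [smul_zero, add_zero, Complex.real_smul, mul_one]
    push_cast
    ring
  rw [hmean, norm_sub_rev, sub_zero, sub_zero, norm_one] at hsq
  rw [show S * (S + V + 1) / (S + 1) = V * (S / (S + 1)) + S by field_simp; ring]
  linear_combination V * hsq

theorem dpc_denominator_ge (hS : 0 < S + 1) (hV : 0 ≤ V) (α : ℂ) :
    S * (S + V + 1) / (S + 1) ≤ S * V * ‖1 - α‖ ^ 2 + ‖α‖ ^ 2 * V + S := by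
  rw [dpc_denominator_eq hS.ne']
  have : 0 ≤ V * (S + 1) * ‖α - ((S / (S + 1) : ℝ) : ℂ)‖ ^ 2 := by positivity
  linarith

theorem dpc_denominator_costa (hS : S + 1 ≠ 0) :
    S * V * ‖1 - ((S / (S + 1) : ℝ) : ℂ)‖ ^ 2 + ‖((S / (S + 1) : ℝ) : ℂ)‖ ^ 2 * V + S =
      S * (S + V + 1) / (S + 1) := by
  rw [dpc_denominator_eq hS, sub_self, norm_zero]
  ring

end DirtyPaperCoding

/-- Optimizing the dirty-paper-coding inflation factor: with received signal power `S > 0`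
and received interference power `V ≥ 0`, the DPC rate argument
`f α = S (S + V + 1) / (S V |1 − α|² + |α|² V + S)` satisfies `f α ≤ 1 + S` for all `α ∈ ℂ`,
with equality at the Costa inflation factor `α = S / (S + 1)`; hence `⨆ α, f α = 1 + S`.
Equivalently, `S V |1 − α|² + |α|² V + S ≥ S (S + V + 1) / (S + 1)` with equality at
`α = S / (S + 1)`. -/
theorem dpc_inflation_factor_opt (S V : ℝ) (hS : 0 < S) (hV : 0 ≤ V)
    (f : ℂ → ℝ)
    (hf : ∀ α : ℂ, f α = S * (S + V + 1) /
      (S * V * ‖1 - α‖ ^ 2 + ‖α‖ ^ 2 * V + S)) :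
    (∀ α : ℂ, f α ≤ 1 + S) ∧
    f ((S / (S + 1) : ℝ) : ℂ) = 1 + S ∧
    (⨆ α : ℂ, f α) = 1 + S ∧
    (∀ α : ℂ, S * V * ‖1 - α‖ ^ 2 + ‖α‖ ^ 2 * V + S ≥
      S * (S + V + 1) / (S + 1)) ∧
    S * V * ‖1 - ((S / (S + 1) : ℝ) : ℂ)‖ ^ 2 +
        ‖((S / (S + 1) : ℝ) : ℂ)‖ ^ 2 * V + S =
      S * (S + V + 1) / (S + 1) := by
  have hS1 : 0 < S + 1 := by linarith
  have hnum : 0 < S * (S + V + 1) := by positivity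
  have hmin_val : S * (S + V + 1) / (S * (S + V + 1) / (S + 1)) = 1 + S := by
    rw [div_div_cancel₀ hnum.ne', add_comm]
  have hle : ∀ α : ℂ, f α ≤ 1 + S := fun α => by
    rw [hf, ← hmin_val]
    exact div_le_div_of_nonneg_left hnum.le (by positivity) (dpc_denominator_ge hS1 hV α)
  have hcosta : f ((S / (S + 1) : ℝ) : ℂ) = 1 + S := by
    rw [hf, dpc_denominator_costa hS1.ne', hmin_val]
  refine ⟨hle, hcosta, ?_, dpc_denominator_ge hS1 hV, dpc_denominator_costa hS1.ne'⟩
  exact ciSup_eq_of_forall_le_of_forall_lt_exists_gt hle fun w hw => ⟨_, hcosta ▸ hw⟩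
end
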